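/- arXiv:1405.7129 — 3 statements merged into one kernel-verified Lean document; each statement's English description precedes it below -/
import Mathlib

section
/- Let G be a chain mixed graph. If there is a collider trislide between nodes i and j in G such that there is an arrow from an inner node of the trislide to j (or, symmetrically, to i), and i and j are not adjacent in G, then G is not maximal; i.e., for every node set C disjoint from {i,j} there is a c-connecting walk between i and j given C. -/
/-!
Common definitions: mixed graphs, walks, sections, colliders, c-separation, and the
marginalization / conditioning / anterial-graph algorithms of Sadeghi,
"Marginalization and conditioning for LWF chain graphs".
-/

namespace LWF

variable {V : Type*} {W : Type*}

/-- A mixed graph: a node set together with three edge relations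
(lines `i — j`, arrows `i → j`, arcs `i ↔ j`). -/
structure MixedGraph (V : Type*) where
  nodes : Set V
  line : V → V → Prop
  arrow : V → V → Prop
  arc : V → V → Prop

namespace MixedGraph

/-- The structural axioms of a (loopless) mixed graph: lines and arcs are symmetric,
all three relations are irreflexive, and edges join nodes of the graph. -/
def IsMixedGraph (G : MixedGraph V) : Prop :=
  (∀ i j, G.line i j → G.line j i) ∧ (∀ i, ¬ G.line i i) ∧
  (∀ i, ¬ G.arrow i i) ∧
  (∀ i j, G.arc i j → G.arc j i) ∧ (∀ i, ¬ G.arc i i) ∧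
  (∀ i j, G.line i j → i ∈ G.nodes ∧ j ∈ G.nodes) ∧
  (∀ i j, G.arrow i j → i ∈ G.nodes ∧ j ∈ G.nodes) ∧
  (∀ i j, G.arc i j → i ∈ G.nodes ∧ j ∈ G.nodes)

/-- `i` and `j` are adjacent: some edge joins them. -/
def adj (G : MixedGraph V) (i j : V) : Prop :=
  G.line i j ∨ G.arrow i j ∨ G.arrow j i ∨ G.arc i j

/-- A single step of a semi-directed walk: a line, or an arrow pointing forwards. -/
def sdStep (G : MixedGraph V) (i j : V) : Prop := G.line i j ∨ G.arrow i j

/-- `i` is an anterior of `j`: there is a (nontrivial) semi-directed walk from `i` to `j`;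
by convention a node is not an anterior of itself. -/
def anterior (G : MixedGraph V) (i j : V) : Prop :=
  i ≠ j ∧ Relation.TransGen G.sdStep i j

/-- The set of anteriors of a node. -/
def ant (G : MixedGraph V) (j : V) : Set V := {i | G.anterior i j}

/-- `ant(C) = (⋃ c ∈ C, ant(c)) \ C` -/
def antSet (G : MixedGraph V) (C : Set V) : Set V := (⋃ c ∈ C, G.ant c) \ C

/-- No semi-directed cycle containing at least one arrow: equivalently, there is no
arrow `a → b` together with a semi-directed walk from `b` back to `a`. -/
def NoArrowSemiDirectedCycle (G : MixedGraph V) : Prop :=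
  ∀ a b, G.arrow a b → ¬ Relation.ReflTransGen G.sdStep b a

/-- chain mixed graph -/
def IsCMG (G : MixedGraph V) : Prop := G.IsMixedGraph ∧ G.NoArrowSemiDirectedCycle

/-- chain graph: a CMG without arcs -/
def IsCG (G : MixedGraph V) : Prop := G.IsCMG ∧ ∀ i j, ¬ G.arc i j

/-- anterial graph: a CMG in which no arc has an endpoint that is an anterior of the
other endpoint -/
def IsAnG (G : MixedGraph V) : Prop :=
  G.IsCMG ∧ ∀ i j, G.arc i j → ¬ G.anterior i j

/-- `p` is a path consisting only of lines, from `a` to `b` (possibly a single node). -/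
def lineSection (G : MixedGraph V) (p : List V) (a b : V) : Prop :=
  p ≠ [] ∧ p.Chain' G.line ∧ p.Nodup ∧ p.head? = some a ∧ p.getLast? = some b

end MixedGraph

/-- The kind of a non-line connecting edge on a walk. -/
inductive Conn : Type
  | fwd   -- an arrow pointing forwards along the walk
  | bwd   -- an arrow pointing backwards along the walk
  | biarc -- an arc

/-- The connecting edge has an arrowhead pointing at the following section. -/
def Conn.headTowardsNext : Conn → Prop
  | .fwd => True
  | .bwd => False
  | .biarc => True

/-- The connecting edge has an arrowhead pointing at the preceding section. -/
def Conn.headTowardsPrev : Conn → Prop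
  | .fwd => False
  | .bwd => True
  | .biarc => True

/-- The connecting edge of kind `c` from `a` to `b` is present in `G`. -/
def MixedGraph.connOK (G : MixedGraph V) : Conn → V → V → Prop
  | .fwd, a, b => G.arrow a b
  | .bwd, a, b => G.arrow b a
  | .biarc, a, b => G.arc a b

/-- A walk in a mixed graph, presented by its (unique) decomposition into sections:
a first section followed by a list of non-line connecting edges, each with the next
section. Each section is a nonempty list of nodes joined by lines. -/
structure MWalk (V : Type*) where
  first : List V
  rest : List (Conn × List V)

namespace MWalk

/-- The list of sections of a walk. -/
def sections (w : MWalk V) : List (List V) := w.first :: w.rest.map Prod.snd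

/-- The list of connecting (non-line) edges of a walk. -/
def conns (w : MWalk V) : List Conn := w.rest.map Prod.fst

/-- The list of all nodes of a walk, in order. -/
def nodes (w : MWalk V) : List V := w.sections.flatten

/-- The inner nodes of a walk: all nodes except the two endpoints. -/
def innerNodes (w : MWalk V) : List V := (w.nodes.drop 1).dropLast

/-- The section with index `k` is a collider section of the walk: it is an inner
section and the connecting edges on both sides have an arrowhead pointing at it. -/
def colliderAt (w : MWalk V) (k : ℕ) : Prop :=
  0 < k ∧ k < w.conns.length ∧
  (∃ c, w.conns[k-1]? = some c ∧ c.headTowardsNext) ∧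
  (∃ c, w.conns[k]? = some c ∧ c.headTowardsPrev)

/-- There is an arrowhead pointing at the endpoint section containing the first node. -/
def headAtStart (w : MWalk V) : Prop :=
  ∃ c, w.conns[0]? = some c ∧ c.headTowardsPrev

/-- There is an arrowhead pointing at the endpoint section containing the last node. -/
def headAtEnd (w : MWalk V) : Prop :=
  ∃ c, w.conns[w.conns.length - 1]? = some c ∧ c.headTowardsNext

/-- The walk is `c`-connecting given `C`: every collider section contains a node of `C`
and no non-collider section contains a node of `C`. -/
def cConnecting (w : MWalk V) (C : Set V) : Prop :=
  (∀ k s, w.sections[k]? = some s → w.colliderAt k → ∃ x ∈ s, x ∈ C) ∧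
  (∀ k s, w.sections[k]? = some s → ¬ w.colliderAt k → ∀ x ∈ s, x ∉ C)

end MWalk

/-- Two walks between the same endpoints are endpoint-identical: one has an arrowhead
pointing at its endpoint section containing the first (resp. last) endpoint exactly when
the other does. -/
def EndpointIdentical (w₁ w₂ : MWalk V) : Prop :=
  (w₁.headAtStart ↔ w₂.headAtStart) ∧ (w₁.headAtEnd ↔ w₂.headAtEnd)

/-- Auxiliary: the tail of a walk is realized in `G`, starting at node `a`
and ending at node `j`. -/
def walkAux (G : MixedGraph V) : V → List (Conn × List V) → V → Prop
  | a, [], j => a = j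
  | a, (c, s) :: rest, j =>
      s ≠ [] ∧ s.Chain' G.line ∧
      (∃ b, s.head? = some b ∧ G.connOK c a b) ∧
      (∃ e, s.getLast? = some e ∧ walkAux G e rest j)

/-- `w` is a walk in `G` between `i` and `j` (read from `i` to `j`). -/
def MWalk.IsWalkFrom (w : MWalk V) (G : MixedGraph V) (i j : V) : Prop :=
  w.first ≠ [] ∧ w.first.Chain' G.line ∧ w.first.head? = some i ∧
  ∃ e, w.first.getLast? = some e ∧ walkAux G e w.rest j

namespace MixedGraph

/-- There is a `c`-connecting walk between `i` and `j` given `C` in `G`. -/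
def cConnect (G : MixedGraph V) (i j : V) (C : Set V) : Prop :=
  ∃ w : MWalk V, w.IsWalkFrom G i j ∧ w.cConnecting C

/-- `A ⊥_c B | C` in `G`. -/
def cSep (G : MixedGraph V) (A B C : Set V) : Prop :=
  ∀ i ∈ A, ∀ j ∈ B, ¬ G.cConnect i j C

/-- `edgeB G i j hi hj`: there is an edge between `i` and `j` in `G` with an arrowhead
at `i` iff `hi = true`, and an arrowhead at `j` iff `hj = true`. -/
def edgeB (G : MixedGraph V) (i j : V) : Bool → Bool → Prop
  | false, false => G.line i j
  | false, true => G.arrow i j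
  | true, false => G.arrow j i
  | true, true => G.arc i j

/-- A graph is maximal if every pair of distinct non-adjacent nodes is c-separated by
some node set. -/
def MaximalCMG (G : MixedGraph V) : Prop :=
  ∀ i ∈ G.nodes, ∀ j ∈ G.nodes, i ≠ j → ¬ G.adj i j →
    ∃ C : Set V, C ⊆ G.nodes ∧ i ∉ C ∧ j ∉ C ∧ ¬ G.cConnect i j C

/-- Delete the nodes in `M` together with all edges incident to them. -/
def deleteNodes (G : MixedGraph V) (M : Set V) : MixedGraph V where
  nodes := G.nodes \ M
  line i j := G.line i j ∧ i ∉ M ∧ j ∉ M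
  arrow i j := G.arrow i j ∧ i ∉ M ∧ j ∉ M
  arc i j := G.arc i j ∧ i ∉ M ∧ j ∉ M

/-! ### the marginalization algorithm -/

/-- Case 9 of step 1 of the marginalization algorithm: a collider trislide
`m → i — ⋯ — t ↔ j` with `m ∈ M` generates the arc `i ↔ j`. -/
def margGen9 (G : MixedGraph V) (M : Set V) (i j : V) : Prop :=
  ∃ m ∈ M, ∃ p t, G.arrow m i ∧ G.lineSection p i t ∧ G.arc t j ∧
    j ∉ p ∧ m ∉ p ∧ j ≠ m

/-- Step 1 of the marginalization algorithm: for every collider trislide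
`m → i — ⋯ — t ← j` (resp. `m → i — ⋯ — t ↔ j`) with endpoint `m ∈ M`, add the arrow
`j → i` (resp. the arc `i ↔ j`). -/
def margStep1 (G : MixedGraph V) (M : Set V) : MixedGraph V where
  nodes := G.nodes
  line := G.line
  arrow a b := G.arrow a b ∨
    ∃ m ∈ M, ∃ p t, G.arrow m b ∧ G.lineSection p b t ∧ G.arrow a t ∧
      a ∉ p ∧ m ∉ p ∧ a ≠ m
  arc a b := G.arc a b ∨ G.margGen9 M a b ∨ G.margGen9 M b a

end MixedGraph

/-- The kind of an edge. -/
inductive EKind : Type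
  | ln  -- a line
  | ar  -- an arrow
  | bi  -- an arc

/-- Step 2 of the marginalization algorithm, as a closure: starting from the edges of
`H`, repeatedly add, for every tripath with inner node `m ∈ M`, the edge given in
Table 1 (cases 1-7), until no new edge can be added. `MargCl H M EKind.ar a b` means:
an arrow from `a` to `b`. -/
inductive MargCl (H : MixedGraph V) (M : Set V) : EKind → V → V → Prop
  | base_ln {i j : V} : H.line i j → MargCl H M EKind.ln i j
  | base_ar {i j : V} : H.arrow i j → MargCl H M EKind.ar i j
  | base_bi {i j : V} : H.arc i j → MargCl H M EKind.bi i j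
  | symm_ln {i j : V} : MargCl H M EKind.ln i j → MargCl H M EKind.ln j i
  | symm_bi {i j : V} : MargCl H M EKind.bi i j → MargCl H M EKind.bi j i
  /-- `i ← m ← j` generates the arrow `j → i` -/
  | r1 {i j m : V} : m ∈ M → i ≠ j → MargCl H M EKind.ar j m →
      MargCl H M EKind.ar m i → MargCl H M EKind.ar j i
  /-- `i ← m — j` generates the arrow `j → i` -/
  | r2 {i j m : V} : m ∈ M → i ≠ j → MargCl H M EKind.ln m j →
      MargCl H M EKind.ar m i → MargCl H M EKind.ar j i
  /-- `i ↔ m — j` generates the arc `i ↔ j` -/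
  | r3 {i j m : V} : m ∈ M → i ≠ j → MargCl H M EKind.bi i m →
      MargCl H M EKind.ln m j → MargCl H M EKind.bi i j
  /-- `i ← m → j` generates the arc `i ↔ j` -/
  | r4 {i j m : V} : m ∈ M → i ≠ j → MargCl H M EKind.ar m i →
      MargCl H M EKind.ar m j → MargCl H M EKind.bi i j
  /-- `i ← m ↔ j` generates the arc `i ↔ j` -/
  | r5 {i j m : V} : m ∈ M → i ≠ j → MargCl H M EKind.ar m i →
      MargCl H M EKind.bi m j → MargCl H M EKind.bi i j
  /-- `i — m ← j` generates the arrow `j → i` -/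
  | r6 {i j m : V} : m ∈ M → i ≠ j → MargCl H M EKind.ln i m →
      MargCl H M EKind.ar j m → MargCl H M EKind.ar j i
  /-- `i — m — j` generates the line `i — j` -/
  | r7 {i j m : V} : m ∈ M → i ≠ j → MargCl H M EKind.ln i m →
      MargCl H M EKind.ln m j → MargCl H M EKind.ln i j

namespace MixedGraph

/-- The graph obtained after steps 1 and 2 of the marginalization algorithm. -/
def margCore (G : MixedGraph V) (M : Set V) : MixedGraph V where
  nodes := G.nodes
  line := MargCl (G.margStep1 M) M EKind.ln
  arrow := MargCl (G.margStep1 M) M EKind.ar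
  arc := MargCl (G.margStep1 M) M EKind.bi

/-- The marginalization algorithm `α_CMG(G; M, ∅)`. -/
def alphaMarg (G : MixedGraph V) (M : Set V) : MixedGraph V :=
  (G.margCore M).deleteNodes M

/-! ### the conditioning algorithm -/

/-- Step 2, case 4, of the conditioning algorithm: a collider trislide
`s ↔ b — ⋯ — t ← a` with `s ∈ S` generates the arrow `a → b`. -/
def condGenArrow (G : MixedGraph V) (S : Set V) (a b : V) : Prop :=
  ∃ s ∈ S, ∃ p t, G.arc s b ∧ G.lineSection p b t ∧ G.arrow a t ∧
    a ∉ p ∧ s ∉ p ∧ a ≠ s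

/-- Step 2, case 5, of the conditioning algorithm: a collider trislide
`s ↔ i — ⋯ — t ↔ j` with `s ∈ S` generates the arc `i ↔ j`. -/
def condGenArc (G : MixedGraph V) (S : Set V) (i j : V) : Prop :=
  ∃ s ∈ S, ∃ p t, G.arc s i ∧ G.lineSection p i t ∧ G.arc t j ∧
    j ∉ p ∧ s ∉ p ∧ j ≠ s

/-- The graph obtained after step 2 of the conditioning algorithm. -/
def condStep2 (G : MixedGraph V) (S : Set V) : MixedGraph V where
  nodes := G.nodes
  line := G.line
  arrow a b := G.arrow a b ∨ G.condGenArrow S a b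
  arc a b := G.arc a b ∨ G.condGenArc S a b ∨ G.condGenArc S b a

end MixedGraph

/-- Step 3 of the conditioning algorithm, as a closure: starting from the edges of `H`,
repeatedly add, for every collider trislide whose inner section has all its nodes in
`S`, the indicated edge; lines generated in this step are not used to form new
sections (sections are formed from the lines of `H` only). -/
inductive CondCl (H : MixedGraph V) (S : Set V) : EKind → V → V → Prop
  | base_ln {i j : V} : H.line i j → CondCl H S EKind.ln i j
  | base_ar {i j : V} : H.arrow i j → CondCl H S EKind.ar i j
  | base_bi {i j : V} : H.arc i j → CondCl H S EKind.bi i j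
  | symm_ln {i j : V} : CondCl H S EKind.ln i j → CondCl H S EKind.ln j i
  | symm_bi {i j : V} : CondCl H S EKind.bi i j → CondCl H S EKind.bi j i
  /-- `i → s — ⋯ — s ← j` generates the line `i — j` -/
  | rLL {i j a b : V} {p : List V} :
      H.lineSection p a b → (∀ x ∈ p, x ∈ S) → i ≠ j → i ∉ p → j ∉ p →
      CondCl H S EKind.ar i a → CondCl H S EKind.ar j b → CondCl H S EKind.ln i j
  /-- `i ↔ s — ⋯ — s ← j` generates the arrow `j → i` -/
  | rBL {i j a b : V} {p : List V} :
      H.lineSection p a b → (∀ x ∈ p, x ∈ S) → i ≠ j → i ∉ p → j ∉ p →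
      CondCl H S EKind.bi i a → CondCl H S EKind.ar j b → CondCl H S EKind.ar j i
  /-- `i ↔ s — ⋯ — s ↔ j` generates the arc `i ↔ j` -/
  | rBB {i j a b : V} {p : List V} :
      H.lineSection p a b → (∀ x ∈ p, x ∈ S) → i ≠ j → i ∉ p → j ∉ p →
      CondCl H S EKind.bi i a → CondCl H S EKind.bi j b → CondCl H S EKind.bi i j

namespace MixedGraph

/-- Step 4 of the conditioning algorithm: remove all arrowheads pointing at members of
`S`; arrows pointing at `S` become lines, and arcs with an endpoint in `S` become
arrows pointing away from that endpoint (arcs with both endpoints in `S` become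
lines). -/
def removeHeads (G : MixedGraph V) (S : Set V) : MixedGraph V where
  nodes := G.nodes
  line a b := G.line a b ∨ (G.arrow a b ∧ b ∈ S) ∨ (G.arrow b a ∧ a ∈ S) ∨
    (G.arc a b ∧ a ∈ S ∧ b ∈ S)
  arrow a b := (G.arrow a b ∧ b ∉ S) ∨ (G.arc a b ∧ a ∈ S ∧ b ∉ S)
  arc a b := G.arc a b ∧ a ∉ S ∧ b ∉ S

/-- The graph obtained after steps 1–3 of the conditioning algorithm. -/
def condCore (G : MixedGraph V) (C : Set V) : MixedGraph V where
  nodes := G.nodes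
  line := CondCl (G.condStep2 (C ∪ G.antSet C)) (C ∪ G.antSet C) EKind.ln
  arrow := CondCl (G.condStep2 (C ∪ G.antSet C)) (C ∪ G.antSet C) EKind.ar
  arc := CondCl (G.condStep2 (C ∪ G.antSet C)) (C ∪ G.antSet C) EKind.bi

/-- The conditioning algorithm `α_CMG(G; ∅, C)`. -/
def alphaCond (G : MixedGraph V) (C : Set V) : MixedGraph V :=
  ((G.condCore C).removeHeads (C ∪ G.antSet C)).deleteNodes C

/-- Simultaneous marginalization and conditioning:
`α_CMG(G; M, C) = α_CMG(α_CMG(G; M, ∅); ∅, C)`. -/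
def alphaCMG (G : MixedGraph V) (M C : Set V) : MixedGraph V :=
  (G.alphaMarg M).alphaCond C

/-! ### anterial graphs -/

/-- Step 3 of the anterial-graph algorithm: a trislide `a → t — ⋯ — b ↔ k` with
`k ∈ ant(b)` generates the arrow `a → b`. -/
def angGen3Arrow (H : MixedGraph V) (a b : V) : Prop :=
  ∃ p t k, H.arrow a t ∧ H.lineSection p t b ∧ H.arc b k ∧ H.anterior k b ∧
    a ∉ p ∧ k ∉ p ∧ a ≠ k

/-- Step 3 of the anterial-graph algorithm: a trislide `a ↔ t — ⋯ — b ↔ k` with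
`k ∈ ant(b)` generates the arc `a ↔ b`. -/
def angGen3Arc (H : MixedGraph V) (a b : V) : Prop :=
  ∃ p t k, H.arc a t ∧ H.lineSection p t b ∧ H.arc b k ∧ H.anterior k b ∧
    a ∉ p ∧ k ∉ p ∧ a ≠ k

/-- The graph obtained after step 3 of the anterial-graph algorithm applied to `H`. -/
def angStep3 (H : MixedGraph V) : MixedGraph V where
  nodes := H.nodes
  line := H.line
  arrow a b := H.arrow a b ∨ H.angGen3Arrow a b
  arc a b := H.arc a b ∨ H.angGen3Arc a b ∨ H.angGen3Arc b a

end MixedGraph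

/-- Step 4 of the anterial-graph algorithm, as a closure: repeatedly add, for every
trislide `j → k₁ — ⋯ — k_m ↔ i` (resp. `j ↔ k₁ — ⋯ — k_m ↔ i`) with some `k_r ∈ ant(i)`,
the arrow `j → i` (resp. the arc `j ↔ i`). -/
inductive AnGCl (H : MixedGraph V) : EKind → V → V → Prop
  | base_ln {i j : V} : H.line i j → AnGCl H EKind.ln i j
  | base_ar {i j : V} : H.arrow i j → AnGCl H EKind.ar i j
  | base_bi {i j : V} : H.arc i j → AnGCl H EKind.bi i j
  | symm_bi {i j : V} : AnGCl H EKind.bi i j → AnGCl H EKind.bi j i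
  /-- `j → k₁ — ⋯ — k_m ↔ i` with some `k_r ∈ ant(i)` generates the arrow `j → i` -/
  | r_ar {i j a b : V} {p : List V} :
      H.lineSection p a b → (∃ r ∈ p, H.anterior r i) → j ∉ p → i ∉ p → j ≠ i →
      AnGCl H EKind.ar j a → AnGCl H EKind.bi b i → AnGCl H EKind.ar j i
  /-- `j ↔ k₁ — ⋯ — k_m ↔ i` with some `k_r ∈ ant(i)` generates the arc `j ↔ i` -/
  | r_bi {i j a b : V} {p : List V} :
      H.lineSection p a b → (∃ r ∈ p, H.anterior r i) → j ∉ p → i ∉ p → j ≠ i →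
      AnGCl H EKind.bi j a → AnGCl H EKind.bi b i → AnGCl H EKind.bi j i

namespace MixedGraph

/-- The graph obtained after step 4 of the anterial-graph algorithm applied to `H`. -/
def angStep4Graph (H : MixedGraph V) : MixedGraph V where
  nodes := H.nodes
  line := AnGCl H EKind.ln
  arrow := AnGCl H EKind.ar
  arc := AnGCl H EKind.bi

/-- Step 5 of the anterial-graph algorithm: replace every arc `a ↔ b` with `a ∈ ant(b)`
by the arrow `a → b`, and by the line `a — b` if also `b ∈ ant(a)`. -/
def angStep5 (K : MixedGraph V) : MixedGraph V where
  nodes := K.nodes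
  line a b := K.line a b ∨ (K.arc a b ∧ K.anterior a b ∧ K.anterior b a)
  arrow a b := K.arrow a b ∨ (K.arc a b ∧ K.anterior a b ∧ ¬ K.anterior b a)
  arc a b := K.arc a b ∧ ¬ K.anterior a b ∧ ¬ K.anterior b a

/-- The operation `α_{CMG.AnG}`: steps 3, 4, and 5 of the anterial-graph algorithm. -/
def cmgToAnG (H : MixedGraph V) : MixedGraph V :=
  H.angStep3.angStep4Graph.angStep5

/-- The anterial-graph algorithm `α_AnG(G; M, C) = α_{CMG.AnG}(α_CMG(G; M, C))`. -/
def alphaAnG (G : MixedGraph V) (M C : Set V) : MixedGraph V :=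
  (G.alphaCMG M C).cmgToAnG

/-- A subprimitive inducing walk from `j` to `i` in `G`: a walk from `j` to `i` all of
whose (inner) sections are collider and have all their nodes in `ant(i)`. -/
def SubprimFrom (G : MixedGraph V) (w : MWalk V) (j i : V) : Prop :=
  w.IsWalkFrom G j i ∧
  (∀ k, 0 < k → k < w.conns.length → w.colliderAt k) ∧
  (∀ k s, 0 < k → k < w.conns.length → w.sections[k]? = some s →
    ∀ x ∈ s, G.anterior x i)

end MixedGraph

/-- The image of a mixed graph under a map of node sets. -/
def MixedGraph.gmap (f : V → W) (G : MixedGraph V) : MixedGraph W where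
  nodes := f '' G.nodes
  line a b := ∃ i j, G.line i j ∧ a = f i ∧ b = f j
  arrow a b := ∃ i j, G.arrow i j ∧ a = f i ∧ b = f j
  arc a b := ∃ i j, G.arc i j ∧ a = f i ∧ b = f j

end LWF

namespace LWF

variable {V : Type*}

/-!
If `C` meets the section of the collider trislide, the trislide itself is c-connecting.
Otherwise cut the section at the inner node `k` with `k → j` (resp. `k → i`): the tail of
that arrow makes the shortened section a non-collider, and it avoids `C`.
-/

def MWalk.viaSection (i : V) (c₁ : Conn) (s : List V) (c₂ : Conn) (j : V) : MWalk V :=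
  ⟨[i], [(c₁, s), (c₂, [j])]⟩

namespace MWalk

variable {G : MixedGraph V} {i j a b : V} {c₁ c₂ : Conn} {s : List V} {C : Set V}

theorem isWalkFrom_viaSection (hs : G.lineSection s a b) (h₁ : G.connOK c₁ i a)
    (h₂ : G.connOK c₂ b j) : (viaSection i c₁ s c₂ j).IsWalkFrom G i j := by
  obtain ⟨hne, hchain, -, hhead, hlast⟩ := hs
  exact ⟨List.cons_ne_nil _ _, List.isChain_singleton _, rfl, i, rfl,
    hne, hchain, ⟨a, hhead, h₁⟩, b, hlast,
    List.cons_ne_nil _ _, List.isChain_singleton _, ⟨j, rfl, h₂⟩, j, rfl, rfl⟩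

theorem colliderAt_viaSection_iff {k : ℕ} :
    (viaSection i c₁ s c₂ j).colliderAt k ↔
      k = 1 ∧ c₁.headTowardsNext ∧ c₂.headTowardsPrev := by
  constructor
  · rintro ⟨hk0, hk2, ⟨c, hc, hnext⟩, ⟨c', hc', hprev⟩⟩
    simp only [viaSection, conns, List.map_cons, List.map_nil, List.length_cons,
      List.length_nil] at hk2 hc hc'
    obtain rfl : k = 1 := by omega
    simp only [Nat.sub_self, List.getElem?_cons_succ, List.getElem?_cons_zero,
      Option.some.injEq] at hc hc'
    subst hc hc'
    exact ⟨rfl, hnext, hprev⟩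
  · rintro ⟨rfl, hnext, hprev⟩
    exact ⟨Nat.one_pos, by simp [viaSection, conns], ⟨c₁, rfl, hnext⟩, ⟨c₂, rfl, hprev⟩⟩

theorem cConnecting_viaSection (hi : i ∉ C) (hj : j ∉ C)
    (hcol : c₁.headTowardsNext → c₂.headTowardsPrev → ∃ x ∈ s, x ∈ C)
    (hncol : ¬ (c₁.headTowardsNext ∧ c₂.headTowardsPrev) → ∀ x ∈ s, x ∉ C) :
    (viaSection i c₁ s c₂ j).cConnecting C := by
  constructor
  · intro k t ht hk
    obtain ⟨rfl, hnext, hprev⟩ := colliderAt_viaSection_iff.1 hk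
    obtain rfl : s = t := by simpa [viaSection, sections] using ht
    exact hcol hnext hprev
  · intro k t ht hk x hx
    match k with
    | 0 =>
      obtain rfl : [i] = t := by simpa [viaSection, sections] using ht
      rwa [List.mem_singleton.1 hx]
    | 1 =>
      obtain rfl : s = t := by simpa [viaSection, sections] using ht
      exact hncol (fun h => hk (colliderAt_viaSection_iff.2 ⟨rfl, h⟩)) x hx
    | 2 =>
      obtain rfl : [j] = t := by simpa [viaSection, sections] using ht
      rwa [List.mem_singleton.1 hx]
    | _ + 3 => simp [viaSection, sections] at ht

end MWalk

namespace MixedGraph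

variable {G : MixedGraph V} {i j a b k : V} {p : List V}

theorem lineSection.exists_prefix (hp : G.lineSection p a b) (hk : k ∈ p) :
    ∃ q ⊆ p, G.lineSection q a k := by
  obtain ⟨-, hchain, hnodup, hhead, -⟩ := hp
  obtain ⟨q, r, rfl⟩ := List.append_of_mem hk
  have hpre : q ++ [k] <+: q ++ k :: r := ⟨r, by simp⟩
  refine ⟨q ++ [k], hpre.subset, by simp, hchain.prefix hpre, hnodup.sublist hpre.sublist,
    ?_, by simp⟩
  cases q <;> simp_all

theorem lineSection.exists_suffix (hp : G.lineSection p a b) (hk : k ∈ p) :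
    ∃ r ⊆ p, G.lineSection r k b := by
  obtain ⟨-, hchain, hnodup, -, hlast⟩ := hp
  obtain ⟨q, r, rfl⟩ := List.append_of_mem hk
  have hsuf : k :: r <:+ q ++ k :: r := ⟨q, rfl⟩
  refine ⟨k :: r, hsuf.subset, by simp, hchain.suffix hsuf, hnodup.sublist hsuf.sublist,
    rfl, ?_⟩
  rwa [List.getLast?_append_of_ne_nil _ (List.cons_ne_nil _ _)] at hlast

theorem exists_connOK_headTowardsNext (h : G.arrow i a ∨ G.arc i a) :
    ∃ c, G.connOK c i a ∧ c.headTowardsNext := by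
  rcases h with h | h
  exacts [⟨.fwd, h, trivial⟩, ⟨.biarc, h, trivial⟩]

theorem exists_connOK_headTowardsPrev (harc : ∀ x y, G.arc x y → G.arc y x)
    (h : G.arrow j b ∨ G.arc j b) : ∃ c, G.connOK c b j ∧ c.headTowardsPrev := by
  rcases h with h | h
  exacts [⟨.bwd, h, trivial⟩, ⟨.biarc, harc _ _ h, trivial⟩]

variable {c₁ c₂ : Conn} {C : Set V}

theorem cConnect_of_collider_section (h₁ : G.connOK c₁ i a) (h₂ : G.connOK c₂ b j)
    (hnext : c₁.headTowardsNext) (hprev : c₂.headTowardsPrev) (hp : G.lineSection p a b)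
    (hpC : ∃ x ∈ p, x ∈ C) (hi : i ∉ C) (hj : j ∉ C) : G.cConnect i j C :=
  ⟨_, MWalk.isWalkFrom_viaSection hp h₁ h₂,
    MWalk.cConnecting_viaSection hi hj (fun _ _ => hpC) (fun h => (h ⟨hnext, hprev⟩).elim)⟩

theorem cConnect_of_noncollider_section (h₁ : G.connOK c₁ i a) (h₂ : G.connOK c₂ b j)
    (hnc : ¬ (c₁.headTowardsNext ∧ c₂.headTowardsPrev)) (hp : G.lineSection p a b)
    (hpC : ∀ x ∈ p, x ∉ C) (hi : i ∉ C) (hj : j ∉ C) : G.cConnect i j C :=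
  ⟨_, MWalk.isWalkFrom_viaSection hp h₁ h₂,
    MWalk.cConnecting_viaSection hi hj (fun h h' => (hnc ⟨h, h'⟩).elim) fun _ => hpC⟩

end MixedGraph

theorem stmt11_general (G : MixedGraph V) (hG : G.IsCMG) (i j : V)
    (p : List V) (a b : V) (hsec : G.lineSection p a b)
    (hleft : G.arrow i a ∨ G.arc i a) (hright : G.arrow j b ∨ G.arc j b)
    (harr : (∃ k ∈ p, G.arrow k j) ∨ (∃ k ∈ p, G.arrow k i)) :
    ∀ C : Set V, i ∉ C → j ∉ C → G.cConnect i j C := by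
  obtain ⟨⟨-, -, -, harc, -⟩, -⟩ := hG
  intro C hi hj
  obtain ⟨c₁, h₁, hnext⟩ := MixedGraph.exists_connOK_headTowardsNext hleft
  obtain ⟨c₂, h₂, hprev⟩ := MixedGraph.exists_connOK_headTowardsPrev harc hright
  by_cases hpC : ∃ x ∈ p, x ∈ C
  · exact MixedGraph.cConnect_of_collider_section h₁ h₂ hnext hprev hsec hpC hi hj
  push Not at hpC
  rcases harr with ⟨k, hkp, hkj⟩ | ⟨k, hkp, hki⟩
  · obtain ⟨q, hqp, hq⟩ := hsec.exists_prefix hkp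
    exact MixedGraph.cConnect_of_noncollider_section (c₂ := .fwd) h₁ hkj (fun h => h.2)
      hq (fun x hx => hpC x (hqp hx)) hi hj
  · obtain ⟨r, hrp, hr⟩ := hsec.exists_suffix hkp
    exact MixedGraph.cConnect_of_noncollider_section (c₁ := .bwd) hki h₂ (fun h => h.1)
      hr (fun x hx => hpC x (hrp hx)) hi hj

/-- If there is a collider trislide between `i` and `j` (arc or arrow from `i` into the
section `p` from `a` to `b`, and arc or arrow from `j` into it) such that there is an
arrow from an inner node of the trislide to `j` (or, symmetrically, to `i`), and `i`
and `j` are not adjacent, then `G` is not maximal: for every node set `C` disjoint from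
`{i, j}` there is a `c`-connecting walk between `i` and `j` given `C`. -/
theorem stmt11 (G : MixedGraph V) (hG : G.IsCMG) (i j : V)
    (p : List V) (a b : V) (hsec : G.lineSection p a b)
    (hleft : G.arrow i a ∨ G.arc i a) (hright : G.arrow j b ∨ G.arc j b)
    (hip : i ∉ p) (hjp : j ∉ p) (hij : i ≠ j)
    (harr : (∃ k ∈ p, G.arrow k j) ∨ (∃ k ∈ p, G.arrow k i))
    (hnadj : ¬ G.adj i j) :
    ∀ C : Set V, i ∉ C → j ∉ C → G.cConnect i j C :=
  stmt11_general G hG i j p a b hsec hleft hright harr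

end LWF
end

section
/- For every anterial graph G on node set V and disjoint subsets M and C of V, the graph α_AnG(G;M,C) is an anterial graph. -/
namespace LWF

variable {V : Type*}


/-! ### Auxiliary development for the proof -/

namespace MixedGraph

open Relation

variable {G H : MixedGraph V} {S M C : Set V} {a b i j x y : V} {p : List V}

/-- A semi-directed walk containing at least one arrow. -/
def ArrPath (H : MixedGraph V) (a b : V) : Prop :=
  ∃ x y, ReflTransGen H.sdStep a x ∧ H.arrow x y ∧ ReflTransGen H.sdStep y b

lemma ArrPath.rtg (h : H.ArrPath a b) : ReflTransGen H.sdStep a b := by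
  obtain ⟨x, y, h1, h2, h3⟩ := h
  exact h1.trans ((ReflTransGen.single (show H.sdStep x y from Or.inr h2)).trans h3)

lemma ArrPath.of_arrow (h : H.arrow a b) : H.ArrPath a b := ⟨a, b, .refl, h, .refl⟩

lemma rtg_arrPath (h : ReflTransGen H.sdStep a b) (h2 : H.ArrPath b x) : H.ArrPath a x := by
  obtain ⟨u, v, h1, huv, h3⟩ := h2; exact ⟨u, v, h.trans h1, huv, h3⟩

lemma arrPath_rtg (h : H.ArrPath a b) (h2 : ReflTransGen H.sdStep b x) : H.ArrPath a x := by
  obtain ⟨u, v, h1, huv, h3⟩ := h; exact ⟨u, v, h1, huv, h3.trans h2⟩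

lemma rtg_lift {r s : V → V → Prop} {a b : V} (h : ∀ x y, r x y → ReflTransGen s x y)
    (hab : ReflTransGen r a b) : ReflTransGen s a b := by
  induction hab with
  | refl => exact .refl
  | tail _ h2 ih => exact ih.trans (h _ _ h2)

lemma noASDC_of {H' : MixedGraph V} (hH : H.NoArrowSemiDirectedCycle)
    (hline : ∀ a b, H'.line a b → ReflTransGen H.sdStep a b)
    (harr : ∀ a b, H'.arrow a b → H.ArrPath a b) :
    H'.NoArrowSemiDirectedCycle := by
  intro a b hab hba
  obtain ⟨x, y, hax, hxy, hyb⟩ := harr a b hab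
  have hba' : ReflTransGen H.sdStep b a := by
    refine rtg_lift (fun p q hpq => ?_) hba
    rcases hpq with h | h
    · exact hline _ _ h
    · exact (harr _ _ h).rtg
  exact hH x y hxy (hyb.trans (hba'.trans hax))

lemma chain'_rtg {r : V → V → Prop} (hs : ∀ x y, r x y → r y x) :
    ∀ {p : List V} {a x : V}, p.Chain' r → p.head? = some a → x ∈ p →
      ReflTransGen r a x ∧ ReflTransGen r x a := by
  intro p
  induction p with
  | nil => intro a x _ ha _; simp at ha
  | cons c q ih =>
    intro a x hc ha hx
    simp only [List.head?_cons, Option.some.injEq] at ha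
    subst ha
    rcases List.mem_cons.mp hx with rfl | hx
    · exact ⟨.refl, .refl⟩
    · cases q with
      | nil => simp at hx
      | cons b q' =>
        have hcb : r c b := (List.isChain_cons_cons.mp hc).1
        have h2 := ih (List.isChain_cons_cons.mp hc).2 rfl hx
        exact ⟨(ReflTransGen.single hcb).trans h2.1, h2.2.trans (.single (hs _ _ hcb))⟩

lemma chain'_mem_rtg {r : V → V → Prop} (hs : ∀ x y, r x y → r y x)
    {p : List V} (hc : p.Chain' r) {x y : V} (hx : x ∈ p) (hy : y ∈ p) :
    ReflTransGen r x y := by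
  obtain ⟨a, ha⟩ : ∃ a, p.head? = some a := by
    cases p with
    | nil => simp at hx
    | cons c q => exact ⟨c, rfl⟩
  exact (chain'_rtg hs hc ha hx).2.trans (chain'_rtg hs hc ha hy).1

lemma lineSection.mem_left (h : G.lineSection p a b) : a ∈ p :=
  List.mem_of_mem_head? (by simp [h.2.2.2.1])

lemma lineSection.mem_right (h : G.lineSection p a b) : b ∈ p := by
  obtain ⟨ys, hys⟩ := List.getLast?_eq_some_iff.mp h.2.2.2.2
  simp [hys]

lemma lineSection.chain_rtg {r : V → V → Prop} (h : G.lineSection p a b)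
    (hr : ∀ x y, G.line x y → r x y) (hs : ∀ x y, r x y → r y x)
    {x y : V} (hx : x ∈ p) (hy : y ∈ p) : ReflTransGen r x y :=
  chain'_mem_rtg hs (h.2.1.imp (fun a b h' => hr a b h')) hx hy

lemma lineSection.rtg (h : G.lineSection p a b) (hsym : ∀ x y, G.line x y → G.line y x)
    {x y : V} (hx : x ∈ p) (hy : y ∈ p) : ReflTransGen G.sdStep x y :=
  rtg_lift (fun _ _ h' => .single (Or.inl h'))
    (h.chain_rtg (fun _ _ h' => h') hsym hx hy)

/-! ### marginalization preserves CMGs -/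

lemma margStep1_isCMG (hG : G.IsCMG) (M : Set V) : (G.margStep1 M).IsCMG := by
  obtain ⟨⟨hls, hli, hai, hcs, hci, hln, han, hcn⟩, hc⟩ := hG
  refine ⟨⟨hls, hli, ?_, ?_, ?_, hln, ?_, ?_⟩, ?_⟩
  · rintro i (h | ⟨m, hm, p, t, h1, h2, h3, h4, h5, h6⟩)
    · exact hai i h
    · exact h4 h2.mem_left
  · rintro i j (h | h | h)
    · exact Or.inl (hcs _ _ h)
    · exact Or.inr (Or.inr h)
    · exact Or.inr (Or.inl h)
  · rintro i (h | ⟨m, hm, p, t, h1, h2, h3, h4, h5, h6⟩ | ⟨m, hm, p, t, h1, h2, h3, h4, h5, h6⟩)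
    · exact hci i h
    · exact h4 h2.mem_left
    · exact h4 h2.mem_left
  · rintro i j (h | ⟨m, hm, p, t, h1, h2, h3, h4, h5, h6⟩)
    · exact han _ _ h
    · exact ⟨(han _ _ h3).1, (han _ _ h1).2⟩
  · rintro i j (h | ⟨m, hm, p, t, h1, h2, h3, h4, h5, h6⟩ | ⟨m, hm, p, t, h1, h2, h3, h4, h5, h6⟩)
    · exact hcn _ _ h
    · exact ⟨(han _ _ h1).2, (hcn _ _ h3).2⟩
    · exact ⟨(hcn _ _ h3).2, (han _ _ h1).2⟩
  · refine noASDC_of hc (fun a b h => .single (Or.inl h)) ?_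
    rintro a b (h | ⟨m, hm, p, t, h1, h2, h3, h4, h5, h6⟩)
    · exact .of_arrow h
    · exact ⟨a, t, .refl, h3, h2.rtg hls h2.mem_right h2.mem_left⟩

lemma margCl_inv {H : MixedGraph V} (hH : H.IsMixedGraph) {k : EKind} {i j : V}
    (h : MargCl H M k i j) :
    (i ∈ H.nodes ∧ j ∈ H.nodes ∧ i ≠ j) ∧
      (match k with
       | EKind.ln => ReflTransGen H.sdStep i j ∧ ReflTransGen H.sdStep j i
       | EKind.ar => H.ArrPath i j
       | EKind.bi => True) := by
  obtain ⟨hls, hli, hai, hcs, hci, hln, han, hcn⟩ := hH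
  induction h with
  | base_ln h => exact ⟨⟨(hln _ _ h).1, (hln _ _ h).2, by rintro rfl; exact hli _ h⟩,
      .single (Or.inl h), .single (Or.inl (hls _ _ h))⟩
  | base_ar h => exact ⟨⟨(han _ _ h).1, (han _ _ h).2, by rintro rfl; exact hai _ h⟩,
      .of_arrow h⟩
  | base_bi h => exact ⟨⟨(hcn _ _ h).1, (hcn _ _ h).2, by rintro rfl; exact hci _ h⟩, trivial⟩
  | symm_ln h ih => exact ⟨⟨ih.1.2.1, ih.1.1, ih.1.2.2.symm⟩, ih.2.2, ih.2.1⟩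
  | symm_bi h ih => exact ⟨⟨ih.1.2.1, ih.1.1, ih.1.2.2.symm⟩, trivial⟩
  | r1 hm hij h1 h2 ih1 ih2 =>
      exact ⟨⟨ih1.1.1, ih2.1.2.1, hij.symm⟩, arrPath_rtg ih1.2 ih2.2.rtg⟩
  | r2 hm hij h1 h2 ih1 ih2 =>
      exact ⟨⟨ih1.1.2.1, ih2.1.2.1, hij.symm⟩, rtg_arrPath ih1.2.2 ih2.2⟩
  | r3 hm hij h1 h2 ih1 ih2 => exact ⟨⟨ih1.1.1, ih2.1.2.1, hij⟩, trivial⟩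
  | r4 hm hij h1 h2 ih1 ih2 => exact ⟨⟨ih1.1.2.1, ih2.1.2.1, hij⟩, trivial⟩
  | r5 hm hij h1 h2 ih1 ih2 => exact ⟨⟨ih1.1.2.1, ih2.1.2.1, hij⟩, trivial⟩
  | r6 hm hij h1 h2 ih1 ih2 =>
      exact ⟨⟨ih2.1.1, ih1.1.1, hij.symm⟩, arrPath_rtg ih2.2 ih1.2.2⟩
  | r7 hm hij h1 h2 ih1 ih2 =>
      exact ⟨⟨ih1.1.1, ih2.1.2.1, hij⟩, ih1.2.1.trans ih2.2.1, ih2.2.2.trans ih1.2.2⟩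

lemma margCore_isCMG (hG : G.IsCMG) (M : Set V) : (G.margCore M).IsCMG := by
  obtain ⟨h1, h1c⟩ := margStep1_isCMG hG M
  refine ⟨⟨fun i j h => h.symm_ln, fun i h => (margCl_inv h1 h).1.2.2 rfl,
      fun i h => (margCl_inv h1 h).1.2.2 rfl,
      fun i j h => h.symm_bi, fun i h => (margCl_inv h1 h).1.2.2 rfl,
      fun i j h => ⟨(margCl_inv h1 h).1.1, (margCl_inv h1 h).1.2.1⟩,
      fun i j h => ⟨(margCl_inv h1 h).1.1, (margCl_inv h1 h).1.2.1⟩,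
      fun i j h => ⟨(margCl_inv h1 h).1.1, (margCl_inv h1 h).1.2.1⟩⟩, ?_⟩
  exact noASDC_of h1c (fun a b h => (margCl_inv h1 h).2.1) (fun a b h => (margCl_inv h1 h).2)

lemma deleteNodes_isCMG (hG : G.IsCMG) (M : Set V) : (G.deleteNodes M).IsCMG := by
  obtain ⟨⟨hls, hli, hai, hcs, hci, hln, han, hcn⟩, hc⟩ := hG
  refine ⟨⟨fun i j h => ⟨hls _ _ h.1, h.2.2, h.2.1⟩, fun i h => hli i h.1, fun i h => hai i h.1,
    fun i j h => ⟨hcs _ _ h.1, h.2.2, h.2.1⟩, fun i h => hci i h.1,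
    fun i j h => ⟨⟨(hln _ _ h.1).1, h.2.1⟩, (hln _ _ h.1).2, h.2.2⟩,
    fun i j h => ⟨⟨(han _ _ h.1).1, h.2.1⟩, (han _ _ h.1).2, h.2.2⟩,
    fun i j h => ⟨⟨(hcn _ _ h.1).1, h.2.1⟩, (hcn _ _ h.1).2, h.2.2⟩⟩, ?_⟩
  exact noASDC_of hc (fun a b h => .single (Or.inl h.1)) (fun a b h => .of_arrow h.1)

/-! ### conditioning preserves CMGs -/

lemma condStep2_isCMG (hG : G.IsCMG) (S : Set V) : (G.condStep2 S).IsCMG := by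
  obtain ⟨⟨hls, hli, hai, hcs, hci, hln, han, hcn⟩, hc⟩ := hG
  refine ⟨⟨hls, hli, ?_, ?_, ?_, hln, ?_, ?_⟩, ?_⟩
  · rintro i (h | ⟨s, hs, p, t, h1, h2, h3, h4, h5, h6⟩)
    · exact hai i h
    · exact h4 h2.mem_left
  · rintro i j (h | h | h)
    · exact Or.inl (hcs _ _ h)
    · exact Or.inr (Or.inr h)
    · exact Or.inr (Or.inl h)
  · rintro i (h | ⟨s, hs, p, t, h1, h2, h3, h4, h5, h6⟩ | ⟨s, hs, p, t, h1, h2, h3, h4, h5, h6⟩)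
    · exact hci i h
    · exact h4 h2.mem_left
    · exact h4 h2.mem_left
  · rintro i j (h | ⟨s, hs, p, t, h1, h2, h3, h4, h5, h6⟩)
    · exact han _ _ h
    · exact ⟨(han _ _ h3).1, (hcn _ _ h1).2⟩
  · rintro i j (h | ⟨s, hs, p, t, h1, h2, h3, h4, h5, h6⟩ | ⟨s, hs, p, t, h1, h2, h3, h4, h5, h6⟩)
    · exact hcn _ _ h
    · exact ⟨(hcn _ _ h1).2, (hcn _ _ h3).2⟩
    · exact ⟨(hcn _ _ h3).2, (hcn _ _ h1).2⟩
  · refine noASDC_of hc (fun a b h => .single (Or.inl h)) ?_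
    rintro a b (h | ⟨s, hs, p, t, h1, h2, h3, h4, h5, h6⟩)
    · exact .of_arrow h
    · exact ⟨a, t, .refl, h3, h2.rtg hls h2.mem_right h2.mem_left⟩

lemma anterior_closed {x s : V} (hs : s ∈ C ∪ G.antSet C) (h : G.anterior x s) :
    x ∈ C ∪ G.antSet C := by
  by_cases hx : x ∈ C
  · exact Or.inl hx
  rcases hs with hs | hs
  · exact Or.inr ⟨Set.mem_biUnion hs h, hx⟩
  · obtain ⟨hset, hsc⟩ := hs
    obtain ⟨c, hc, hsc'⟩ := Set.mem_iUnion₂.mp hset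
    by_cases hxc : x = c
    · exact Or.inl (hxc ▸ hc)
    · exact Or.inr ⟨Set.mem_biUnion hc ⟨hxc, h.2.trans hsc'.2⟩, hx⟩

lemma condStep2_sdStep_anterior (hG : G.IsMixedGraph) {x s : V}
    (h : (G.condStep2 S).sdStep x s) : x = s ∨ G.anterior x s := by
  by_cases hxs : x = s
  · exact Or.inl hxs
  refine Or.inr ⟨hxs, ?_⟩
  rcases h with h | h | ⟨s', hs', p, t, h1, h2, h3, h4, h5, h6⟩
  · exact .single (Or.inl h)
  · exact .single (Or.inr h)
  · exact (TransGen.single (show G.sdStep x t from Or.inr h3)).trans_left (h2.rtg hG.1 h2.mem_right h2.mem_left)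

lemma removeHeads_isMixedGraph (hG : G.IsMixedGraph) (S : Set V) :
    (G.removeHeads S).IsMixedGraph := by
  obtain ⟨hls, hli, hai, hcs, hci, hln, han, hcn⟩ := hG
  refine ⟨?_, ?_, ?_, ?_, ?_, ?_, ?_, ?_⟩
  · rintro i j (h | ⟨h, hS⟩ | ⟨h, hS⟩ | ⟨h, h1, h2⟩)
    · exact Or.inl (hls _ _ h)
    · exact Or.inr (Or.inr (Or.inl ⟨h, hS⟩))
    · exact Or.inr (Or.inl ⟨h, hS⟩)
    · exact Or.inr (Or.inr (Or.inr ⟨hcs _ _ h, h2, h1⟩))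
  · rintro i (h | ⟨h, _⟩ | ⟨h, _⟩ | ⟨h, _, _⟩)
    · exact hli i h
    · exact hai i h
    · exact hai i h
    · exact hci i h
  · rintro i (⟨h, _⟩ | ⟨h, _, _⟩)
    · exact hai i h
    · exact hci i h
  · rintro i j ⟨h, h1, h2⟩; exact ⟨hcs _ _ h, h2, h1⟩
  · rintro i ⟨h, _, _⟩; exact hci i h
  · rintro i j (h | ⟨h, _⟩ | ⟨h, _⟩ | ⟨h, _, _⟩)
    · exact hln _ _ h
    · exact han _ _ h
    · exact ⟨(han _ _ h).2, (han _ _ h).1⟩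
    · exact hcn _ _ h
  · rintro i j (⟨h, _⟩ | ⟨h, _, _⟩)
    · exact han _ _ h
    · exact hcn _ _ h
  · rintro i j ⟨h, _, _⟩; exact hcn _ _ h

lemma removeHeads_noASDC (hG : G.IsMixedGraph) (hc : G.NoArrowSemiDirectedCycle)
    (hcl : ∀ x s, s ∈ S → G.sdStep x s → x ∈ S) :
    (G.removeHeads S).NoArrowSemiDirectedCycle := by
  have sub : ∀ x y, x ∉ S → (G.removeHeads S).sdStep x y → y ∉ S ∧ G.sdStep x y := by
    intro x y hx h
    rcases h with (h | ⟨h, hS⟩ | ⟨h, hS⟩ | ⟨h, h1, h2⟩) | (⟨h, hS⟩ | ⟨h, h1, h2⟩)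
    · exact ⟨fun hy => hx (hcl x y hy (Or.inl h)), Or.inl h⟩
    · exact absurd (hcl x y hS (Or.inr h)) hx
    · exact absurd hS hx
    · exact absurd h1 hx
    · exact ⟨hS, Or.inr h⟩
    · exact absurd h1 hx
  have walk : ∀ x y, x ∉ S → Relation.ReflTransGen (G.removeHeads S).sdStep x y →
      y ∉ S ∧ Relation.ReflTransGen G.sdStep x y := by
    intro x y hx h
    induction h with
    | refl => exact ⟨hx, .refl⟩
    | tail h1 h2 ih =>
      obtain ⟨hm, hw⟩ := ih
      obtain ⟨hy, hstep⟩ := sub _ _ hm h2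
      exact ⟨hy, hw.tail hstep⟩
  intro a b hab hba
  have hbS : b ∉ S := by rcases hab with ⟨_, h⟩ | ⟨_, _, h⟩ <;> exact h
  obtain ⟨haS, hw⟩ := walk b a hbS hba
  rcases hab with ⟨h, _⟩ | ⟨_, h1, _⟩
  · exact hc a b h hw
  · exact haS h1

lemma condCl_basic {H : MixedGraph V} (hH : H.IsMixedGraph) {k : EKind} {i j : V}
    (h : CondCl H S k i j) : i ∈ H.nodes ∧ j ∈ H.nodes ∧ i ≠ j := by
  obtain ⟨hls, hli, hai, hcs, hci, hln, han, hcn⟩ := hH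
  induction h with
  | base_ln h => exact ⟨(hln _ _ h).1, (hln _ _ h).2, by rintro rfl; exact hli _ h⟩
  | base_ar h => exact ⟨(han _ _ h).1, (han _ _ h).2, by rintro rfl; exact hai _ h⟩
  | base_bi h => exact ⟨(hcn _ _ h).1, (hcn _ _ h).2, by rintro rfl; exact hci _ h⟩
  | symm_ln h ih => exact ⟨ih.2.1, ih.1, ih.2.2.symm⟩
  | symm_bi h ih => exact ⟨ih.2.1, ih.1, ih.2.2.symm⟩
  | rLL hsec hS hij hip hjp h1 h2 ih1 ih2 => exact ⟨ih1.1, ih2.1, hij⟩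
  | rBL hsec hS hij hip hjp h1 h2 ih1 ih2 => exact ⟨ih2.1, ih1.1, hij.symm⟩
  | rBB hsec hS hij hip hjp h1 h2 ih1 ih2 => exact ⟨ih1.1, ih2.1, hij⟩

lemma condCl_inv {H : MixedGraph V} (hH : H.IsMixedGraph) {k : EKind} {i j : V}
    (h : CondCl H S k i j) :
    (match k with
     | EKind.ln => ReflTransGen (H.removeHeads S).sdStep i j ∧
         ReflTransGen (H.removeHeads S).sdStep j i
     | EKind.ar => (j ∈ S → ReflTransGen (H.removeHeads S).sdStep i j ∧
           ReflTransGen (H.removeHeads S).sdStep j i) ∧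
         (j ∉ S → (H.removeHeads S).ArrPath i j)
     | EKind.bi =>
         (i ∈ S → (j ∈ S → ReflTransGen (H.removeHeads S).sdStep i j) ∧
           (j ∉ S → (H.removeHeads S).ArrPath i j)) ∧
         (j ∈ S → (i ∈ S → ReflTransGen (H.removeHeads S).sdStep j i) ∧
           (i ∉ S → (H.removeHeads S).ArrPath j i))) := by
  have hK := removeHeads_isMixedGraph hH S
  have lsec : ∀ {p : List V} {a b x y : V}, H.lineSection p a b → x ∈ p → y ∈ p →
      ReflTransGen (H.removeHeads S).sdStep x y := by
    intro p a b x y hsec hx hy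
    exact rtg_lift (fun _ _ h' => .single (Or.inl h'))
      (hsec.chain_rtg (fun _ _ h' => Or.inl h') hK.1 hx hy)
  induction h with
  | base_ln h =>
      exact ⟨.single (Or.inl (Or.inl h)), .single (Or.inl (Or.inl (hH.1 _ _ h)))⟩
  | base_ar h =>
      refine ⟨fun hjS => ⟨.single (Or.inl (Or.inr (Or.inl ⟨h, hjS⟩))),
        .single (Or.inl (Or.inr (Or.inr (Or.inl ⟨h, hjS⟩))))⟩,
        fun hjS => .of_arrow (Or.inl ⟨h, hjS⟩)⟩
  | base_bi h =>
      have h' := hH.2.2.2.1 _ _ h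
      exact ⟨fun hiS => ⟨fun hjS => .single (Or.inl (Or.inr (Or.inr (Or.inr ⟨h, hiS, hjS⟩)))),
          fun hjS => .of_arrow (Or.inr ⟨h, hiS, hjS⟩)⟩,
        fun hjS => ⟨fun hiS => .single (Or.inl (Or.inr (Or.inr (Or.inr ⟨h', hjS, hiS⟩)))),
          fun hiS => .of_arrow (Or.inr ⟨h', hjS, hiS⟩)⟩⟩
  | symm_ln h ih => exact ⟨ih.2, ih.1⟩
  | symm_bi h ih => exact ⟨ih.2, ih.1⟩
  | rLL hsec hS hij hip hjp h1 h2 ih1 ih2 =>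
      have haS := hS _ hsec.mem_left
      have hbS := hS _ hsec.mem_right
      exact ⟨(ih1.1 haS).1.trans ((lsec hsec hsec.mem_left hsec.mem_right).trans (ih2.1 hbS).2),
        (ih2.1 hbS).1.trans ((lsec hsec hsec.mem_right hsec.mem_left).trans (ih1.1 haS).2)⟩
  | rBL hsec hS hij hip hjp h1 h2 ih1 ih2 =>
      have haS := hS _ hsec.mem_left
      have hbS := hS _ hsec.mem_right
      refine ⟨fun hiS => ?_, fun hiS => ?_⟩
      · exact ⟨(ih2.1 hbS).1.trans ((lsec hsec hsec.mem_right hsec.mem_left).trans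
            ((ih1.2 haS).1 hiS)),
          ((ih1.1 hiS).1 haS).trans ((lsec hsec hsec.mem_left hsec.mem_right).trans
            (ih2.1 hbS).2)⟩
      · exact rtg_arrPath ((ih2.1 hbS).1.trans (lsec hsec hsec.mem_right hsec.mem_left))
          ((ih1.2 haS).2 hiS)
  | rBB hsec hS hij hip hjp h1 h2 ih1 ih2 =>
      have haS := hS _ hsec.mem_left
      have hbS := hS _ hsec.mem_right
      refine ⟨fun hiS => ⟨fun hjS => ?_, fun hjS => ?_⟩, fun hjS => ⟨fun hiS => ?_, fun hiS => ?_⟩⟩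
      · exact ((ih1.1 hiS).1 haS).trans ((lsec hsec hsec.mem_left hsec.mem_right).trans
          ((ih2.2 hbS).1 hjS))
      · exact rtg_arrPath (((ih1.1 hiS).1 haS).trans (lsec hsec hsec.mem_left hsec.mem_right))
          ((ih2.2 hbS).2 hjS)
      · exact ((ih2.1 hjS).1 hbS).trans ((lsec hsec hsec.mem_right hsec.mem_left).trans
          ((ih1.2 haS).1 hiS))
      · exact rtg_arrPath (((ih2.1 hjS).1 hbS).trans (lsec hsec hsec.mem_right hsec.mem_left))
          ((ih1.2 haS).2 hiS)

lemma alphaCond_isCMG (hG : G.IsCMG) (C : Set V) : (G.alphaCond C).IsCMG := by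
  set S := C ∪ G.antSet C with hSdef
  obtain ⟨h1m, h1c⟩ := condStep2_isCMG hG S
  have hcl : ∀ x s, s ∈ S → (G.condStep2 S).sdStep x s → x ∈ S := by
    intro x s hs h
    rcases condStep2_sdStep_anterior hG.1 h with rfl | h'
    · exact hs
    · exact anterior_closed hs h'
  have hKc : ((G.condStep2 S).removeHeads S).NoArrowSemiDirectedCycle :=
    removeHeads_noASDC h1m h1c hcl
  have hcorem : (G.condCore C).IsMixedGraph :=
    ⟨fun i j h => h.symm_ln,
     fun i h => (condCl_basic h1m h).2.2 rfl,
     fun i h => (condCl_basic h1m h).2.2 rfl,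
     fun i j h => h.symm_bi,
     fun i h => (condCl_basic h1m h).2.2 rfl,
     fun i j h => ⟨(condCl_basic h1m h).1, (condCl_basic h1m h).2.1⟩,
     fun i j h => ⟨(condCl_basic h1m h).1, (condCl_basic h1m h).2.1⟩,
     fun i j h => ⟨(condCl_basic h1m h).1, (condCl_basic h1m h).2.1⟩⟩
  have h2m := removeHeads_isMixedGraph hcorem S
  have h2c : ((G.condCore C).removeHeads S).NoArrowSemiDirectedCycle := by
    refine noASDC_of hKc ?_ ?_
    · rintro a b (h | ⟨h, hS'⟩ | ⟨h, hS'⟩ | ⟨h, h1, h2⟩)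
      · exact (condCl_inv h1m h).1
      · exact ((condCl_inv h1m h).1 hS').1
      · exact ((condCl_inv h1m h).1 hS').2
      · exact ((condCl_inv h1m h).1 h1).1 h2
    · rintro a b (⟨h, hS'⟩ | ⟨h, h1, h2⟩)
      · exact (condCl_inv h1m h).2 hS'
      · exact ((condCl_inv h1m h).1 h1).2 h2
  exact deleteNodes_isCMG ⟨h2m, h2c⟩ C

/-! ### the anterial-graph steps -/

lemma angStep3_isCMG (hH : H.IsCMG) : H.angStep3.IsCMG := by
  obtain ⟨⟨hls, hli, hai, hcs, hci, hln, han, hcn⟩, hc⟩ := hH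
  refine ⟨⟨hls, hli, ?_, ?_, ?_, hln, ?_, ?_⟩, ?_⟩
  · rintro i (h | ⟨p, t, k, h1, h2, h3, h4, h5, h6, h7⟩)
    · exact hai i h
    · exact h5 h2.mem_right
  · rintro i j (h | h | h)
    · exact Or.inl (hcs _ _ h)
    · exact Or.inr (Or.inr h)
    · exact Or.inr (Or.inl h)
  · rintro i (h | ⟨p, t, k, h1, h2, h3, h4, h5, h6, h7⟩ | ⟨p, t, k, h1, h2, h3, h4, h5, h6, h7⟩)
    · exact hci i h
    · exact h5 h2.mem_right
    · exact h5 h2.mem_right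
  · rintro i j (h | ⟨p, t, k, h1, h2, h3, h4, h5, h6, h7⟩)
    · exact han _ _ h
    · exact ⟨(han _ _ h1).1, (hcn _ _ h3).1⟩
  · rintro i j (h | ⟨p, t, k, h1, h2, h3, h4, h5, h6, h7⟩ | ⟨p, t, k, h1, h2, h3, h4, h5, h6, h7⟩)
    · exact hcn _ _ h
    · exact ⟨(hcn _ _ h1).1, (hcn _ _ h3).1⟩
    · exact ⟨(hcn _ _ h3).1, (hcn _ _ h1).1⟩
  · refine noASDC_of hc (fun a b h => .single (Or.inl h)) ?_
    rintro a b (h | ⟨p, t, k, h1, h2, h3, h4, h5, h6, h7⟩)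
    · exact .of_arrow h
    · exact ⟨a, t, .refl, h1, h2.rtg hls h2.mem_left h2.mem_right⟩

lemma anGCl_ln {H : MixedGraph V} {i j : V} (h : AnGCl H EKind.ln i j) : H.line i j := by
  cases h with
  | base_ln h => exact h

lemma anGCl_inv {H : MixedGraph V} (hH : H.IsMixedGraph) {k : EKind} {i j : V}
    (h : AnGCl H k i j) :
    (i ∈ H.nodes ∧ j ∈ H.nodes ∧ i ≠ j) ∧
      (match k with
       | EKind.ar => H.ArrPath i j
       | _ => True) := by
  obtain ⟨hls, hli, hai, hcs, hci, hln, han, hcn⟩ := hH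
  induction h with
  | base_ln h => exact ⟨⟨(hln _ _ h).1, (hln _ _ h).2, by rintro rfl; exact hli _ h⟩, trivial⟩
  | base_ar h => exact ⟨⟨(han _ _ h).1, (han _ _ h).2, by rintro rfl; exact hai _ h⟩,
      .of_arrow h⟩
  | base_bi h => exact ⟨⟨(hcn _ _ h).1, (hcn _ _ h).2, by rintro rfl; exact hci _ h⟩, trivial⟩
  | symm_bi h ih => exact ⟨⟨ih.1.2.1, ih.1.1, ih.1.2.2.symm⟩, trivial⟩
  | r_ar hsec hr hjp hip hji h1 h2 ih1 ih2 =>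
      obtain ⟨r, hrp, hri⟩ := hr
      refine ⟨⟨ih1.1.1, ih2.1.2.1, hji⟩, ?_⟩
      exact arrPath_rtg ih1.2
        ((hsec.rtg hls hsec.mem_left hrp).trans hri.2.to_reflTransGen)
  | r_bi hsec hr hjp hip hji h1 h2 ih1 ih2 => exact ⟨⟨ih1.1.1, ih2.1.2.1, hji⟩, trivial⟩

lemma angStep4_isCMG (hH : H.IsCMG) : H.angStep4Graph.IsCMG := by
  have hm := hH.1
  refine ⟨⟨fun i j h => .base_ln (hm.1 _ _ (anGCl_ln h)),
    fun i h => hm.2.1 i (anGCl_ln h),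
    fun i h => (anGCl_inv hm h).1.2.2 rfl,
    fun i j h => h.symm_bi,
    fun i h => (anGCl_inv hm h).1.2.2 rfl,
    fun i j h => hm.2.2.2.2.2.1 _ _ (anGCl_ln h),
    fun i j h => ⟨(anGCl_inv hm h).1.1, (anGCl_inv hm h).1.2.1⟩,
    fun i j h => ⟨(anGCl_inv hm h).1.1, (anGCl_inv hm h).1.2.1⟩⟩, ?_⟩
  exact noASDC_of hH.2 (fun a b h => .single (Or.inl (anGCl_ln h)))
    (fun a b h => (anGCl_inv hm h).2)

lemma rtg_transGen_of_ne {r : V → V → Prop} {a b : V} (h : ReflTransGen r a b)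
    (hne : a ≠ b) : TransGen r a b := by
  rcases h.cases_head with rfl | ⟨c, hc, hcb⟩
  · exact absurd rfl hne
  · exact TransGen.head' hc hcb

lemma angStep5_isAnG {K : MixedGraph V} (hK : K.IsCMG) : K.angStep5.IsAnG := by
  obtain ⟨hm, hc⟩ := hK
  obtain ⟨hls, hli, hai, hcs, hci, hln, han, hcn⟩ := hm
  have hstep : ∀ x y, K.angStep5.sdStep x y → ReflTransGen K.sdStep x y := by
    rintro x y ((h | ⟨h, h1, h2⟩) | (h | ⟨h, h1, h2⟩))
    · exact .single (Or.inl h)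
    · exact h1.2.to_reflTransGen
    · exact .single (Or.inr h)
    · exact h1.2.to_reflTransGen
  refine ⟨⟨⟨?_, ?_, ?_, ?_, ?_, ?_, ?_, ?_⟩, ?_⟩, ?_⟩
  · rintro i j (h | ⟨h, h1, h2⟩)
    · exact Or.inl (hls _ _ h)
    · exact Or.inr ⟨hcs _ _ h, h2, h1⟩
  · rintro i (h | ⟨h, _, _⟩)
    · exact hli i h
    · exact hci i h
  · rintro i (h | ⟨h, _, _⟩)
    · exact hai i h
    · exact hci i h
  · rintro i j ⟨h, h1, h2⟩; exact ⟨hcs _ _ h, h2, h1⟩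
  · rintro i ⟨h, _, _⟩; exact hci i h
  · rintro i j (h | ⟨h, _, _⟩)
    · exact hln _ _ h
    · exact hcn _ _ h
  · rintro i j (h | ⟨h, _, _⟩)
    · exact han _ _ h
    · exact hcn _ _ h
  · rintro i j ⟨h, _, _⟩; exact hcn _ _ h
  · intro a b hab hba
    have hba' : ReflTransGen K.sdStep b a := rtg_lift hstep hba
    rcases hab with h | ⟨h, h1, h2⟩
    · exact hc a b h hba'
    · by_cases hab' : b = a
      · subst hab'; exact hci _ h
      · exact h2 ⟨hab', rtg_transGen_of_ne hba' hab'⟩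
  · rintro i j ⟨h, h1, h2⟩ hant
    exact h1 ⟨hant.1, rtg_transGen_of_ne
      (rtg_lift hstep hant.2.to_reflTransGen) hant.1⟩

end MixedGraph

/-- Graphs generated by the anterial-graph algorithm are anterial graphs. -/
theorem stmt15 (G : MixedGraph V) (hG : G.IsAnG) (M C : Set V)
    (hM : M ⊆ G.nodes) (hC : C ⊆ G.nodes) (hdisj : Disjoint M C) :
    (G.alphaAnG M C).IsAnG := by
  have hCMG : (G.alphaCMG M C).IsCMG :=
    MixedGraph.alphaCond_isCMG
      (MixedGraph.deleteNodes_isCMG (MixedGraph.margCore_isCMG hG.1 M) M) C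
  exact MixedGraph.angStep5_isAnG
    (MixedGraph.angStep4_isCMG (MixedGraph.angStep3_isCMG hCMG))

end LWF
end

section
/- Let H be a chain mixed graph and let i, j be nodes of H. Then i ∈ ant(j) in H if and only if i ∈ ant(j) in α_CMG.AnG(H); indeed, i ∈ ant(j) is preserved in both directions by each of steps 3, 4, and 5 of the operation α_CMG.AnG. -/
/-!
Each of steps 3, 4 and 5 only adds lines and arrows `a → b` (or `a — b`) for which the graph
it is applied to already has a semi-directed walk from `a` to `b`: in steps 3 and 4 it runs
along the trislide `a → t — ⋯ — r`, with `r = b` resp. `r ∈ ant(b)`, and step 5 only converts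
arcs `a ↔ b` with `a ∈ ant(b)`. As no step removes lines or arrows, the semi-directed walks,
hence the anteriors, are the same before and after each step.
-/

theorem List.IsChain.reflTransGen_of_head?_eq_of_mem {α : Type*} {r : α → α → Prop}
    {l : List α} {a x : α} (h : l.IsChain r) (ha : l.head? = some a) (hx : x ∈ l) :
    Relation.ReflTransGen r a x :=
  h.induction (Relation.ReflTransGen r a ·) l (fun _ _ hxy hax => hax.tail hxy)
    (fun hne => (List.head_eq_iff_head?_eq_some hne).2 ha ▸ .refl) x hx

namespace LWF

variable {V : Type*}

namespace MixedGraph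

theorem anterior_of_sdStep_le_transGen {G G' : MixedGraph V}
    (h : ∀ a b, G.sdStep a b → Relation.TransGen G'.sdStep a b) {i j : V}
    (hij : G.anterior i j) : G'.anterior i j :=
  ⟨hij.1, Relation.TransGen.lift' id h _ _ hij.2⟩

theorem anterior_iff_of_sdStep_le_transGen {G G' : MixedGraph V}
    (h : ∀ a b, G.sdStep a b → Relation.TransGen G'.sdStep a b)
    (h' : ∀ a b, G'.sdStep a b → Relation.TransGen G.sdStep a b) (i j : V) :
    G.anterior i j ↔ G'.anterior i j :=
  ⟨anterior_of_sdStep_le_transGen h, anterior_of_sdStep_le_transGen h'⟩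

theorem lineSection.reflTransGen_sdStep_of_mem {G : MixedGraph V} {p : List V} {a b x : V}
    (h : G.lineSection p a b) (hx : x ∈ p) : Relation.ReflTransGen G.sdStep a x :=
  (h.2.1.imp fun _ _ => Or.inl).reflTransGen_of_head?_eq_of_mem h.2.2.2.1 hx

theorem lineSection.reflTransGen_sdStep {G : MixedGraph V} {p : List V} {a b : V}
    (h : G.lineSection p a b) : Relation.ReflTransGen G.sdStep a b :=
  h.reflTransGen_sdStep_of_mem (List.mem_of_getLast? h.2.2.2.2)

theorem angGen3Arrow.transGen_sdStep {H : MixedGraph V} {a b : V} (h : H.angGen3Arrow a b) :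
    Relation.TransGen H.sdStep a b := by
  obtain ⟨p, t, k, hat, hp, -⟩ := h
  exact .head' (Or.inr hat) hp.reflTransGen_sdStep

theorem transGen_sdStep_of_angStep3_sdStep {H : MixedGraph V} {a b : V}
    (h : H.angStep3.sdStep a b) : Relation.TransGen H.sdStep a b := by
  rcases h with hl | har | hgen
  · exact .single (Or.inl hl)
  · exact .single (Or.inr har)
  · exact hgen.transGen_sdStep

theorem transGen_sdStep_of_angStep5_sdStep {K : MixedGraph V} {a b : V}
    (h : K.angStep5.sdStep a b) : Relation.TransGen K.sdStep a b := by
  rcases h with (hl | ⟨-, hab, -⟩) | (har | ⟨-, hab, -⟩)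
  · exact .single (Or.inl hl)
  · exact hab.2
  · exact .single (Or.inr har)
  · exact hab.2

end MixedGraph

namespace AnGCl

variable {H : MixedGraph V} {a b : V}

theorem line_of_ln (h : AnGCl H .ln a b) : H.line a b := by
  cases h
  assumption

theorem transGen_sdStep_of_ar (h : AnGCl H .ar a b) : Relation.TransGen H.sdStep a b := by
  generalize he : EKind.ar = e at h
  induction h with
  | base_ar hab => exact .single (Or.inr hab)
  | r_ar hp hant _ _ _ _ _ ihja =>
    obtain ⟨r, hr, hri⟩ := hant
    exact (ihja rfl).trans (.trans_right (hp.reflTransGen_sdStep_of_mem hr) hri.2)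
  | _ => cases he

end AnGCl

namespace MixedGraph

theorem transGen_sdStep_of_angStep4Graph_sdStep {H : MixedGraph V} {a b : V}
    (h : H.angStep4Graph.sdStep a b) : Relation.TransGen H.sdStep a b := by
  rcases h with hl | har
  · exact .single (Or.inl hl.line_of_ln)
  · exact har.transGen_sdStep_of_ar

theorem anterior_iff_angStep3_anterior (H : MixedGraph V) (i j : V) :
    H.anterior i j ↔ H.angStep3.anterior i j :=
  anterior_iff_of_sdStep_le_transGen (G := H) (G' := H.angStep3)
    (fun _ _ h => .single (h.imp_right Or.inl)) (fun _ _ => transGen_sdStep_of_angStep3_sdStep) i j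

theorem anterior_iff_angStep4Graph_anterior (H : MixedGraph V) (i j : V) :
    H.anterior i j ↔ H.angStep4Graph.anterior i j :=
  anterior_iff_of_sdStep_le_transGen (G := H) (G' := H.angStep4Graph)
    (fun _ _ h => .single (h.imp AnGCl.base_ln AnGCl.base_ar))
    (fun _ _ => transGen_sdStep_of_angStep4Graph_sdStep) i j

theorem anterior_iff_angStep5_anterior (K : MixedGraph V) (i j : V) :
    K.anterior i j ↔ K.angStep5.anterior i j :=
  anterior_iff_of_sdStep_le_transGen (G := K) (G' := K.angStep5)
    (fun _ _ h => .single (h.imp Or.inl Or.inl)) (fun _ _ => transGen_sdStep_of_angStep5_sdStep) i j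

end MixedGraph

theorem stmt16_general (H : MixedGraph V) (i j : V) :
    (H.anterior i j ↔ H.angStep3.anterior i j) ∧
    (H.angStep3.anterior i j ↔ H.angStep3.angStep4Graph.anterior i j) ∧
    (H.angStep3.angStep4Graph.anterior i j ↔ H.cmgToAnG.anterior i j) ∧
    (H.anterior i j ↔ H.cmgToAnG.anterior i j) := by
  have step3 := H.anterior_iff_angStep3_anterior i j
  have step4 := H.angStep3.anterior_iff_angStep4Graph_anterior i j
  have step5 := H.angStep3.angStep4Graph.anterior_iff_angStep5_anterior i j
  exact ⟨step3, step4, step5, step3.trans (step4.trans step5)⟩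

/-- `i ∈ ant(j)` in a chain mixed graph `H` iff `i ∈ ant(j)` in `α_{CMG.AnG}(H)`;
indeed being an anterior is preserved in both directions by each of steps 3, 4, and 5
of the operation `α_{CMG.AnG}`. -/
theorem stmt16 (H : MixedGraph V) (hH : H.IsCMG) (i j : V)
    (hi : i ∈ H.nodes) (hj : j ∈ H.nodes) :
    (H.anterior i j ↔ H.angStep3.anterior i j) ∧
    (H.angStep3.anterior i j ↔ H.angStep3.angStep4Graph.anterior i j) ∧
    (H.angStep3.angStep4Graph.anterior i j ↔ H.cmgToAnG.anterior i j) ∧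
    (H.anterior i j ↔ H.cmgToAnG.anterior i j) :=
  stmt16_general H i j

end LWF
end
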